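/- arXiv:2506.19207 — 6 statements merged into one kernel-verified Lean document; each statement's English description precedes it below -/
import Mathlib

section
/- Let E and V be finite sets, let B be any real E×V matrix, let g ∈ ℝ^E, let w ∈ ℝ^E have all entries positive, and let β > 0. Suppose there is no nonzero vector Δ ∈ ℝ^E with B^⊤Δ = 0 and g^⊤Δ ≤ −β·‖WΔ‖₁. Then there exists φ ∈ ℝ^V such that |(Bφ + g)_e| ≤ β·w_e for every e ∈ E, i.e. ‖W^{-1}(Bφ + g)‖_∞ ≤ β. (In particular this applies when B is the edge–vertex incidence matrix of a directed graph, in which case vectors Δ with B^⊤Δ = 0 are exactly the circulations.) -/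
/-- duality of min-ratio cycles, Lemma `dual`.
If there is no nonzero `Δ : E → ℝ` with `Bᵀ Δ = 0` and `gᵀ Δ ≤ -β ‖W Δ‖₁`,
then there is a potential `φ : V → ℝ` with `‖W⁻¹ (B φ + g)‖_∞ ≤ β`. -/
theorem min_ratio_cycle_duality {E V : Type*} [Fintype E] [Fintype V]
    (B : Matrix E V ℝ) (g w : E → ℝ) (hw : ∀ e, 0 < w e)
    (β : ℝ) (hβ : 0 < β)
    (hnocycle : ¬ ∃ Δ : E → ℝ, Δ ≠ 0 ∧ (∀ v, ∑ e, B e v * Δ e = 0) ∧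
      ∑ e, g e * Δ e ≤ -β * ∑ e, w e * |Δ e|) :
    ∃ φ : V → ℝ, ∀ e, |(∑ v, B e v * φ v) + g e| ≤ β * w e := by
  classical
  by_contra hgoal
  push_neg at hgoal
  set s : Set (E → ℝ) := Set.pi Set.univ (fun e => Set.Icc (-g e - β * w e) (-g e + β * w e))
    with hs_def
  set t : Set (E → ℝ) := (LinearMap.range B.mulVecLin : Set (E → ℝ)) with ht_def
  have hs_conv : Convex ℝ s := convex_pi fun e _ => convex_Icc _ _
  have hs_comp : IsCompact s := isCompact_univ_pi fun e => isCompact_Icc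
  have ht_conv : Convex ℝ t := (LinearMap.range B.mulVecLin).convex
  have ht_closed : IsClosed t := Submodule.closed_of_finiteDimensional _
  have disj : Disjoint s t := by
    rw [Set.disjoint_right]
    rintro x ⟨φ, rfl⟩ hxs
    obtain ⟨e, he⟩ := hgoal φ
    have := hxs e (Set.mem_univ e)
    simp only [Set.mem_Icc, Matrix.mulVecLin_apply] at this
    have hx : B.mulVec φ e = ∑ v, B e v * φ v := by
      simp [Matrix.mulVec, dotProduct]
    rw [hx] at this
    have : |(∑ v, B e v * φ v) + g e| ≤ β * w e := abs_le.mpr ⟨by linarith [this.1], by linarith [this.2]⟩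
    linarith
  obtain ⟨f, u, v, hfs, huv, hft⟩ :=
    geometric_hahn_banach_compact_closed hs_conv hs_comp ht_conv ht_closed disj
  -- f vanishes on t
  have hv0 : v < 0 := by
    have : (0 : E → ℝ) ∈ t := (LinearMap.range B.mulVecLin).zero_mem
    have := hft 0 this
    simpa using this
  have hft0 : ∀ b ∈ t, f b = 0 := by
    intro b hb
    by_contra hfb
    have hmem : ∀ c : ℝ, c • b ∈ t := fun c => (LinearMap.range B.mulVecLin).smul_mem c hb
    have h1 := hft ((((v - 1) / f b)) • b) (hmem _)
    rw [map_smul, smul_eq_mul, div_mul_cancel₀ _ hfb] at h1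
    linarith
  -- define Δ
  set Δ : E → ℝ := fun e => f (fun j => if e = j then 1 else 0) with hΔ_def
  have hf_eq : ∀ x : E → ℝ, f x = ∑ e, x e * Δ e := by
    intro x
    have h := LinearMap.pi_apply_eq_sum_univ (f : (E → ℝ) →ₗ[ℝ] ℝ) x
    simp only [smul_eq_mul, ContinuousLinearMap.coe_coe] at h
    rw [h]
  -- the maximizer a
  set a : E → ℝ := fun e => -g e + β * w e * Real.sign (Δ e) with ha_def
  have has : a ∈ s := by
    intro e _
    simp only [ha_def, Set.mem_Icc]
    have h1 : |Real.sign (Δ e)| ≤ 1 := by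
      rcases lt_trichotomy (Δ e) 0 with h | h | h
      · rw [Real.sign_of_neg h]; norm_num
      · rw [h, Real.sign_zero]; norm_num
      · rw [Real.sign_of_pos h]; norm_num
    rw [abs_le] at h1
    have hβw : 0 < β * w e := mul_pos hβ (hw e)
    constructor
    · nlinarith [h1.1]
    · nlinarith [h1.2]
  have hfa : f a = -(∑ e, g e * Δ e) + β * ∑ e, w e * |Δ e| := by
    rw [hf_eq]
    rw [Finset.mul_sum, ← Finset.sum_neg_distrib, ← Finset.sum_add_distrib]
    refine Finset.sum_congr rfl fun e _ => ?_
    have hsgn : Δ e * Real.sign (Δ e) = |Δ e| := by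
      rcases lt_trichotomy (Δ e) 0 with h | h | h
      · rw [Real.sign_of_neg h, abs_of_neg h]; ring
      · rw [h]; simp
      · rw [Real.sign_of_pos h, abs_of_pos h]; ring
    simp only [ha_def]
    linear_combination (β * w e) * hsgn
  have hfa_neg : f a < 0 := lt_trans (lt_trans (hfs a has) huv) hv0
  -- contradiction with hnocycle
  apply hnocycle
  refine ⟨fun e => -Δ e, ?_, ?_, ?_⟩
  · intro h
    have hΔ0 : ∀ e, Δ e = 0 := by
      intro e
      have := congrFun h e
      simpa [neg_eq_zero] using this
    rw [hfa] at hfa_neg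
    simp only [hΔ0, abs_zero, mul_zero, Finset.sum_const_zero, neg_zero, add_zero, zero_add] at hfa_neg
    exact lt_irrefl 0 hfa_neg
  · intro v'
    have hmem : B.mulVec (fun j => if v' = j then 1 else 0) ∈ t :=
      LinearMap.mem_range.mpr ⟨_, rfl⟩
    have h0 := hft0 _ hmem
    rw [hf_eq] at h0
    have hcol : ∀ e, B.mulVec (fun j => if v' = j then 1 else 0) e = B e v' := by
      intro e
      simp [Matrix.mulVec, dotProduct, Finset.sum_ite_eq, mul_ite]
    rw [show (∑ e, B e v' * (-Δ e)) = -(∑ e, B.mulVec (fun j => if v' = j then 1 else 0) e * Δ e) by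
      rw [← Finset.sum_neg_distrib]; exact Finset.sum_congr rfl fun e _ => by rw [hcol]; ring]
    rw [h0]; ring
  · rw [hfa] at hfa_neg
    have h1 : ∑ e, g e * (-Δ e) = -(∑ e, g e * Δ e) := by
      rw [← Finset.sum_neg_distrib]; exact Finset.sum_congr rfl fun e _ => by ring
    have h2 : ∑ e, w e * |(-Δ e)| = ∑ e, w e * |Δ e| := by
      exact Finset.sum_congr rfl fun e _ => by rw [abs_neg]
    rw [h1, h2]
    linarith
end

section
/- Let E be a finite set, β > 0, and let g, g̃, w, w̃ ∈ ℝ^E with w and w̃ entrywise positive. Suppose Δ ∈ ℝ^E is nonzero and satisfies g^⊤Δ ≤ −β·‖WΔ‖₁, that w̃_e ≈_2 w_e for all e ∈ E, and that |g̃_e − g_e| ≤ (β/3)·w_e for all e ∈ E. Then g̃^⊤Δ ≤ −(β/3)·‖W̃Δ‖₁. -/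
/-- Lemma `approx`: if `gᵀΔ ≤ -β‖WΔ‖₁`, `w̃ ≈₂ w`, and
`|g̃ₑ - gₑ| ≤ (β/3)·wₑ` for all `e`, then `g̃ᵀΔ ≤ -(β/3)·‖W̃Δ‖₁`. -/
theorem approx_min_ratio {E : Type*} [Fintype E]
    (β : ℝ) (hβ : 0 < β)
    (g gt w wt : E → ℝ) (hw : ∀ e, 0 < w e) (hwt : ∀ e, 0 < wt e)
    (Δ : E → ℝ) (hΔ : Δ ≠ 0)
    (hgood : ∑ e, g e * Δ e ≤ -β * ∑ e, w e * |Δ e|)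
    (hwapprox : ∀ e, (2 : ℝ)⁻¹ * w e ≤ wt e ∧ wt e ≤ 2 * w e)
    (hgapprox : ∀ e, |gt e - g e| ≤ (β / 3) * w e) :
    ∑ e, gt e * Δ e ≤ -(β / 3) * ∑ e, wt e * |Δ e| := by
  have h1 : ∑ e, (gt e - g e) * Δ e ≤ (β / 3) * ∑ e, w e * |Δ e| := by
    calc ∑ e, (gt e - g e) * Δ e ≤ ∑ e, (β / 3) * (w e * |Δ e|) := by
          apply Finset.sum_le_sum
          intro e _
          calc (gt e - g e) * Δ e ≤ |(gt e - g e) * Δ e| := le_abs_self _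
            _ = |gt e - g e| * |Δ e| := abs_mul _ _
            _ ≤ ((β / 3) * w e) * |Δ e| :=
                mul_le_mul_of_nonneg_right (hgapprox e) (abs_nonneg _)
            _ = (β / 3) * (w e * |Δ e|) := by ring
      _ = (β / 3) * ∑ e, w e * |Δ e| := by rw [Finset.mul_sum]
  have h2 : ∑ e, wt e * |Δ e| ≤ 2 * ∑ e, w e * |Δ e| := by
    rw [Finset.mul_sum]
    apply Finset.sum_le_sum
    intro e _
    calc wt e * |Δ e| ≤ (2 * w e) * |Δ e| :=
          mul_le_mul_of_nonneg_right (hwapprox e).2 (abs_nonneg _)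
      _ = 2 * (w e * |Δ e|) := by ring
  have h3 : ∑ e, gt e * Δ e = ∑ e, g e * Δ e + ∑ e, (gt e - g e) * Δ e := by
    rw [← Finset.sum_add_distrib]; apply Finset.sum_congr rfl; intro e _; ring
  calc ∑ e, gt e * Δ e ≤ -β * ∑ e, w e * |Δ e| + (β / 3) * ∑ e, w e * |Δ e| := by
        rw [h3]; exact add_le_add hgood h1
    _ = -(β / 3) * (2 * ∑ e, w e * |Δ e|) := by ring
    _ ≤ -(β / 3) * ∑ e, wt e * |Δ e| := by
        apply mul_le_mul_of_nonpos_left h2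
        linarith
end

section
/- Let E be a finite set, β > 0, and let g, g̃, w, w̃ ∈ ℝ^E with w and w̃ entrywise positive. Suppose Δ ∈ ℝ^E is nonzero and satisfies g̃^⊤Δ ≤ −β·‖W̃Δ‖₁, that w̃_e ≈_2 w_e for all e ∈ E, and that |g_e − g̃_e| ≤ (β/10)·w_e for all e ∈ E. Then g^⊤Δ ≤ −(β/3)·‖WΔ‖₁. -/
/-- if `g̃ᵀΔ ≤ -β‖W̃Δ‖₁`, `w̃ ≈₂ w`, and
`|gₑ - g̃ₑ| ≤ (β/10)·wₑ` for all `e`, then `gᵀΔ ≤ -(β/3)·‖WΔ‖₁`. -/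
theorem approx_min_ratio_reverse {E : Type*} [Fintype E]
    (β : ℝ) (hβ : 0 < β)
    (g gt w wt : E → ℝ) (hw : ∀ e, 0 < w e) (hwt : ∀ e, 0 < wt e)
    (Δ : E → ℝ) (hΔ : Δ ≠ 0)
    (hgood : ∑ e, gt e * Δ e ≤ -β * ∑ e, wt e * |Δ e|)
    (hwapprox : ∀ e, (2 : ℝ)⁻¹ * w e ≤ wt e ∧ wt e ≤ 2 * w e)
    (hgapprox : ∀ e, |g e - gt e| ≤ (β / 10) * w e) :
    ∑ e, g e * Δ e ≤ -(β / 3) * ∑ e, w e * |Δ e| := by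
  set S := ∑ e, w e * |Δ e| with hS
  have hS0 : 0 ≤ S := Finset.sum_nonneg fun e _ =>
    mul_nonneg (hw e).le (abs_nonneg _)
  have h1 : ∑ e, wt e * |Δ e| ≥ (2:ℝ)⁻¹ * S := by
    rw [hS, Finset.mul_sum]
    refine Finset.sum_le_sum fun e _ => ?_
    rw [← mul_assoc]
    exact mul_le_mul_of_nonneg_right (hwapprox e).1 (abs_nonneg _)
  have h2 : ∑ e, (g e - gt e) * Δ e ≤ (β / 10) * S := by
    rw [hS, Finset.mul_sum]
    refine Finset.sum_le_sum fun e _ => ?_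
    calc (g e - gt e) * Δ e ≤ |(g e - gt e) * Δ e| := le_abs_self _
      _ = |g e - gt e| * |Δ e| := abs_mul _ _
      _ ≤ (β / 10) * w e * |Δ e| :=
          mul_le_mul_of_nonneg_right (hgapprox e) (abs_nonneg _)
      _ = β / 10 * (w e * |Δ e|) := by ring
  have key : ∑ e, g e * Δ e = ∑ e, gt e * Δ e + ∑ e, (g e - gt e) * Δ e := by
    rw [← Finset.sum_add_distrib]
    congr 1; ext e; ring
  have h3 : -β * ∑ e, wt e * |Δ e| ≤ -β * ((2:ℝ)⁻¹ * S) := by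
    apply mul_le_mul_of_nonpos_left h1 (by linarith)
  calc ∑ e, g e * Δ e ≤ -β * ((2:ℝ)⁻¹ * S) + (β / 10) * S := by
        rw [key]; exact add_le_add (hgood.trans h3) h2
    _ ≤ -(β / 3) * S := by nlinarith
end

section
/- In the potential setup, let 0 < β < 1, let f be admissible, and set w = w(f), g = g(f). Let g̃ ∈ ℝ^{E∪Ê} satisfy |g̃_e − g_e| ≤ (β/10)·w_e for all e, let w̃ ∈ ℝ^{E∪Ê} be entrywise positive with w̃_e ≈_2 w_e for all e, and let Δ ∈ ℝ^{E∪Ê} be nonzero with g̃^⊤Δ ≤ −β·‖W̃Δ‖₁. Let η > 0 be chosen so that η·‖W̃Δ‖₁ = β/(100p), and assume additionally that ℓ^⊤(f + ηΔ) > F*. Then f + ηΔ is admissible and Φ(f + ηΔ) ≤ Φ(f) − β²/(10⁴·p). -/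
/-
Every summand `h_e` of the potential obeys a second-order upper bound along steps that are small
in the local norm: `h_e(x + t) ≤ h_e(x) - w_e t + 10p (w_e t)²` once `w_e |t| ≤ 1/(4p)`. For `V_p`
this is Bernoulli's inequality below `1` and `log (1 + u) ≥ u - 2u²` above `1`; a step crossing `1`
is routed through `1`. The concave term `10m log(ℓᵀf - F*)` lies below its tangent, so
`Φ(f + t) ≤ Φ(f) + gᵀt + 10p ‖Wt‖₁²`. For `t = ηΔ`, the approximate gradient gives
`gᵀΔ ≤ -(4/5)β ‖W̃Δ‖₁`, and `‖Wt‖₁ ≤ 2η ‖W̃Δ‖₁ = β/(50p)`; the first-order gain `8β²/(10³p)` then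
beats the second-order loss `4β²/(10³p)`.
-/

open Sum

/-- The barrier `V_p`: `V_p(x) = x^{-p}/p` for `x ≤ 1` and `V_p(x) = 1/p - log x` for `x ≥ 1`. -/
noncomputable def barrierV (p : ℕ) (x : ℝ) : ℝ :=
  if x ≤ 1 then x ^ (-(p : ℤ)) / p else 1 / p - Real.log x

/-- The weight function `W_p = -V_p'`: `W_p(x) = x^{-(p+1)}` for `x ≤ 1`, `W_p(x) = 1/x` for `x ≥ 1`. -/
noncomputable def barrierW (p : ℕ) (x : ℝ) : ℝ :=
  if x ≤ 1 then x ^ (-(p : ℤ) - 1) else 1 / x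

/-- The weights `w(f)`: `w(f)_e = 1/(f_e + δ_e)` for `e ∈ E`, `w(f)_e = W_p(f_e)` for `e ∈ Ehat`. -/
noncomputable def weight {E Ehat : Type*} (p : ℕ) (δ : E → ℝ) (f : E ⊕ Ehat → ℝ) : E ⊕ Ehat → ℝ :=
  Sum.elim (fun e => 1 / (f (inl e) + δ e)) (fun e => barrierW p (f (inr e)))

/-- The potential `Φ(f) = 10m·log(ℓᵀf - F*) - ∑_{e∈E} log(f_e + δ_e) + ∑_{e∈Ehat} V_p(f_e)`. -/
noncomputable def pot {E Ehat : Type*} [Fintype E] [Fintype Ehat] (p : ℕ) (ℓ : E ⊕ Ehat → ℝ)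
    (δ : E → ℝ) (m Fstar : ℝ) (f : E ⊕ Ehat → ℝ) : ℝ :=
  10 * m * Real.log (∑ e, ℓ e * f e - Fstar)
    - ∑ e : E, Real.log (f (inl e) + δ e)
    + ∑ e : Ehat, barrierV p (f (inr e))

/-- The gradient `g(f) = (10m/(ℓᵀf - F*))·ℓ - w(f)`. -/
noncomputable def grad {E Ehat : Type*} [Fintype E] [Fintype Ehat] (p : ℕ) (ℓ : E ⊕ Ehat → ℝ)
    (δ : E → ℝ) (m Fstar : ℝ) (f : E ⊕ Ehat → ℝ) : E ⊕ Ehat → ℝ :=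
  fun e => 10 * m / (∑ e', ℓ e' * f e' - Fstar) * ℓ e - weight p δ f e

lemma inv_one_add_le {v : ℝ} (hv : -(1 / 2) ≤ v) : (1 + v)⁻¹ ≤ 1 - v + 2 * v ^ 2 := by
  rw [inv_le_iff_one_le_mul₀ (by linarith)]
  nlinarith [mul_nonneg (sq_nonneg v) (show (0 : ℝ) ≤ 1 + 2 * v by linarith)]

lemma sub_two_mul_sq_le_log_one_add {u : ℝ} (hu : -(1 / 2) ≤ u) :
    u - 2 * u ^ 2 ≤ Real.log (1 + u) := by
  have := Real.one_sub_inv_le_log_of_pos (show 0 < 1 + u by linarith)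
  linarith [inv_one_add_le hu]

lemma inv_one_add_pow_le {p : ℕ} {u : ℝ} (hu : -2 ≤ u) (hpu : -(1 / 2) ≤ p * u) :
    ((1 + u) ^ p)⁻¹ ≤ 1 - p * u + 2 * (p * u) ^ 2 :=
  (inv_anti₀ (by linarith) (one_add_mul_le_pow hu p)).trans (inv_one_add_le hpu)

lemma add_pos_of_inv_mul_abs_lt_one {x t : ℝ} (hx : 0 < x) (ht : x⁻¹ * |t| < 1) :
    0 < x + t := by
  rw [inv_mul_lt_iff₀ hx, mul_one] at ht
  linarith [neg_abs_le t]

lemma neg_log_add_le {x t : ℝ} (hx : 0 < x) (ht : x⁻¹ * |t| ≤ 1 / 2) :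
    -Real.log (x + t) ≤ -Real.log x - x⁻¹ * t + 2 * (x⁻¹ * t) ^ 2 := by
  have hu : -(1 / 2) ≤ x⁻¹ * t := by
    have := mul_le_mul_of_nonneg_left (neg_abs_le t) (inv_nonneg.2 hx.le)
    linarith
  have hxt : x + t = x * (1 + x⁻¹ * t) := by field_simp
  rw [hxt, Real.log_mul hx.ne' (by linarith)]
  linarith [sub_two_mul_sq_le_log_one_add hu]

lemma barrierV_of_le_one (p : ℕ) {x : ℝ} (h : x ≤ 1) : barrierV p x = (x ^ p)⁻¹ / p := by
  rw [barrierV, if_pos h, zpow_neg, zpow_natCast]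

lemma barrierV_of_one_lt (p : ℕ) {x : ℝ} (h : 1 < x) : barrierV p x = 1 / p - Real.log x := by
  rw [barrierV, if_neg h.not_ge]

lemma barrierW_of_le_one (p : ℕ) {x : ℝ} (h : x ≤ 1) : barrierW p x = (x ^ (p + 1))⁻¹ := by
  rw [barrierW, if_pos h, ← zpow_natCast, ← zpow_neg]
  push_cast
  ring_nf

lemma barrierW_of_one_lt (p : ℕ) {x : ℝ} (h : 1 < x) : barrierW p x = x⁻¹ := by
  rw [barrierW, if_neg h.not_ge, one_div]

lemma inv_le_barrierW (p : ℕ) {x : ℝ} (hx : 0 < x) : x⁻¹ ≤ barrierW p x := by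
  rcases le_or_gt x 1 with h | h
  · rw [barrierW_of_le_one p h]
    exact inv_anti₀ (by positivity) (pow_le_of_le_one hx.le h (by omega))
  · rw [barrierW_of_one_lt p h]

lemma barrierV_le_inv_pow_div {p : ℕ} (hp : 0 < p) {y : ℝ} (hy : 0 < y) :
    barrierV p y ≤ (y ^ p)⁻¹ / p := by
  rcases le_or_gt y 1 with h | h
  · rw [barrierV_of_le_one p h]
  · rw [barrierV_of_one_lt p h, ← sub_nonneg]
    have hlog := Real.log_le_sub_one_of_pos (inv_pos.2 (pow_pos hy p))
    rw [Real.log_inv, Real.log_pow] at hlog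
    have : 0 ≤ ((y ^ p)⁻¹ - (1 - p * Real.log y)) / p := div_nonneg (by linarith) (by positivity)
    convert this using 1
    field_simp

lemma barrierV_add_le_of_le_one {p : ℕ} (hp : 1 ≤ p) {x t : ℝ} (hx : 0 < x) (hx1 : x ≤ 1)
    (ht : -(1 / 2) ≤ p * (x⁻¹ * t)) :
    barrierV p (x + t) ≤ barrierV p x - barrierW p x * t + 2 * p * (barrierW p x * t) ^ 2 := by
  set u := x⁻¹ * t
  set A := (x ^ p)⁻¹
  have hpR : (1 : ℝ) ≤ p := by exact_mod_cast hp
  have hu : -(1 / 2) ≤ u := by nlinarith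
  have hA : 1 ≤ A := one_le_inv₀ (by positivity) |>.2 (pow_le_one₀ hx.le hx1)
  have hxt : x + t = x * (1 + u) := by simp only [u]; field_simp
  have hWt : barrierW p x * t = A * u := by
    rw [barrierW_of_le_one p hx1, pow_succ, mul_inv]; ring
  have hpow : ((x + t) ^ p)⁻¹ = A * ((1 + u) ^ p)⁻¹ := by rw [hxt, mul_pow, mul_inv]
  calc barrierV p (x + t) ≤ ((x + t) ^ p)⁻¹ / p :=
        barrierV_le_inv_pow_div hp (by rw [hxt]; nlinarith)
    _ ≤ A * (1 - p * u + 2 * (p * u) ^ 2) / p := by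
        rw [hpow]; gcongr; exact inv_one_add_pow_le (by linarith) ht
    _ = A / p - A * u + 2 * p * A * u ^ 2 := by field_simp
    _ ≤ barrierV p x - barrierW p x * t + 2 * p * (barrierW p x * t) ^ 2 := by
        rw [hWt, barrierV_of_le_one p hx1]
        have : A * u ^ 2 ≤ (A * u) ^ 2 := by nlinarith [sq_nonneg u]
        nlinarith

lemma barrierV_add_le {p : ℕ} (hp : 1 ≤ p) {x t : ℝ} (hx : 0 < x)
    (ht : barrierW p x * |t| ≤ 1 / (4 * p)) :
    barrierV p (x + t) ≤ barrierV p x - barrierW p x * t + 10 * p * (barrierW p x * t) ^ 2 := by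
  have hpR : (1 : ℝ) ≤ p := by exact_mod_cast hp
  have hrel : x⁻¹ * |t| ≤ 1 / (4 * p) :=
    (mul_le_mul_of_nonneg_right (inv_le_barrierW p hx) (abs_nonneg t)).trans ht
  rw [le_div_iff₀ (by positivity)] at hrel
  have hsmall : x⁻¹ * |t| ≤ 1 / 4 := by nlinarith [mul_nonneg (inv_nonneg.2 hx.le) (abs_nonneg t)]
  have hpu : -(1 / 4) ≤ p * (x⁻¹ * t) := by
    have := mul_le_mul_of_nonneg_left (neg_abs_le t) (inv_nonneg.2 hx.le)
    nlinarith
  rcases le_or_gt x 1 with hx1 | hx1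
  · have := barrierV_add_le_of_le_one hp hx hx1 (t := t) (by linarith)
    nlinarith [sq_nonneg (barrierW p x * t)]
  rw [barrierW_of_one_lt p hx1]
  set u := x⁻¹ * t
  have hu : -(1 / 4) ≤ u := by nlinarith
  rcases lt_or_ge 1 (x + t) with hxt1 | hxt1
  · have := neg_log_add_le hx (t := t) (by linarith)
    rw [barrierV_of_one_lt p hxt1, barrierV_of_one_lt p hx1]
    nlinarith [sq_nonneg u]
  -- A step from `x > 1` down to `x + t ≤ 1` is compared with the step from `1` to `x + t`,
  -- which stays in the power regime; `log x ≤ x - 1` pays for the part above `1`.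
  have htx : t = x * u := by simp only [u]; field_simp
  have hx2 : x ≤ 4 / 3 := by nlinarith
  have hcross := barrierV_add_le_of_le_one hp one_pos le_rfl (t := x + t - 1) (by nlinarith)
  simp only [add_sub_cancel, barrierV_of_le_one p le_rfl, barrierW_of_le_one p le_rfl,
    one_pow, inv_one, one_mul] at hcross
  have hlog := Real.log_le_sub_one_of_pos hx
  rw [barrierV_of_one_lt p hx1]
  have hu0 : u ≤ 0 := by nlinarith
  have h1 : -t + u ≤ 2 * u ^ 2 := by
    nlinarith [mul_le_mul_of_nonneg_left (show x - 1 ≤ -(x * u) by linarith) (neg_nonneg.2 hu0)]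
  have h2 : (x + t - 1) ^ 2 ≤ 4 * u ^ 2 := by
    have : (x + t - 1) ^ 2 ≤ t ^ 2 := by nlinarith
    rw [htx, mul_pow] at this
    nlinarith [sq_nonneg u]
  nlinarith

lemma sum_mul_le_of_abs_sub_le {ι : Type*} [Fintype ι] {g g' w x : ι → ℝ} {c : ℝ}
    (h : ∀ i, |g' i - g i| ≤ c * w i) :
    ∑ i, g i * x i ≤ ∑ i, g' i * x i + c * ∑ i, w i * |x i| := by
  rw [Finset.mul_sum, ← Finset.sum_add_distrib]
  refine Finset.sum_le_sum fun i _ => ?_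
  have h1 : -((g' i - g i) * x i) ≤ |g' i - g i| * |x i| :=
    abs_mul (g' i - g i) (x i) ▸ neg_le_abs _
  nlinarith [mul_le_mul_of_nonneg_right (h i) (abs_nonneg (x i))]

lemma sum_mul_abs_le_two_mul_of_half_le {ι : Type*} [Fintype ι] {w w' x : ι → ℝ}
    (hw : ∀ i, 2⁻¹ * w i ≤ w' i) : ∑ i, w i * |x i| ≤ 2 * ∑ i, w' i * |x i| := by
  rw [Finset.mul_sum]
  exact Finset.sum_le_sum fun i _ => by nlinarith [hw i, abs_nonneg (x i)]

lemma sum_sq_mul_le_sq_sum_mul_abs {ι : Type*} [Fintype ι] {w x : ι → ℝ}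
    (hw : ∀ i, 0 ≤ w i) : ∑ i, (w i * x i) ^ 2 ≤ (∑ i, w i * |x i|) ^ 2 := calc
  ∑ i, (w i * x i) ^ 2 = ∑ i, (w i * |x i|) ^ 2 := by simp only [mul_pow, sq_abs]
  _ ≤ (∑ i, w i * |x i|) ^ 2 :=
    Finset.sum_sq_le_sq_sum_of_nonneg fun i _ => mul_nonneg (hw i) (abs_nonneg _)

lemma log_add_le_log_add_div {S d : ℝ} (hS : 0 < S) (hSd : 0 < S + d) :
    Real.log (S + d) ≤ Real.log S + d / S := by
  have := Real.log_le_sub_one_of_pos (div_pos hSd hS)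
  rw [Real.log_div hSd.ne' hS.ne', add_div, div_self hS.ne'] at this
  linarith

section Potential

variable {E Ehat : Type*} {p : ℕ} {δ : E → ℝ} {f t : E ⊕ Ehat → ℝ}

lemma weight_pos (hE : ∀ a, 0 < f (inl a) + δ a) (hEhat : ∀ b, 0 < f (inr b))
    (e : E ⊕ Ehat) : 0 < weight p δ f e := by
  rcases e with a | b
  · exact one_div_pos.2 (hE a)
  · exact (inv_pos.2 (hEhat b)).trans_le (inv_le_barrierW p (hEhat b))

noncomputable def edgeBarrier (p : ℕ) (δ : E → ℝ) : E ⊕ Ehat → ℝ → ℝ :=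
  Sum.elim (fun a x => -Real.log (x + δ a)) (fun _ => barrierV p)

lemma pot_eq_log_add_sum_edgeBarrier [Fintype E] [Fintype Ehat] (ℓ : E ⊕ Ehat → ℝ)
    (m Fstar : ℝ) (f : E ⊕ Ehat → ℝ) :
    pot p ℓ δ m Fstar f =
      10 * m * Real.log (∑ e, ℓ e * f e - Fstar) + ∑ e, edgeBarrier p δ e (f e) := by
  simp only [pot, edgeBarrier, Fintype.sum_sum_type, Sum.elim_inl, Sum.elim_inr,
    Finset.sum_neg_distrib]
  ring

lemma weight_mul_abs_le_sum [Fintype E] [Fintype Ehat] (hE : ∀ a, 0 < f (inl a) + δ a)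
    (hEhat : ∀ b, 0 < f (inr b)) (e : E ⊕ Ehat) :
    weight p δ f e * |t e| ≤ ∑ e', weight p δ f e' * |t e'| :=
  Finset.single_le_sum (fun i _ => mul_nonneg (weight_pos hE hEhat i).le (abs_nonneg _))
    (Finset.mem_univ e)

lemma add_pos_of_sum_weight_mul_abs_lt_one [Fintype E] [Fintype Ehat]
    (hE : ∀ a, 0 < f (inl a) + δ a) (hEhat : ∀ b, 0 < f (inr b))
    (ht : ∑ e, weight p δ f e * |t e| < 1) :
    (∀ a, 0 < (f + t) (inl a) + δ a) ∧ ∀ b, 0 < (f + t) (inr b) := by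
  have hsmall e := (weight_mul_abs_le_sum (t := t) hE hEhat e).trans_lt ht
  refine ⟨fun a => ?_, fun b => ?_⟩
  · have := add_pos_of_inv_mul_abs_lt_one (hE a) (t := t (inl a))
      (by simpa [weight] using hsmall (inl a))
    simp only [Pi.add_apply]
    linarith
  · exact add_pos_of_inv_mul_abs_lt_one (hEhat b)
      ((mul_le_mul_of_nonneg_right (inv_le_barrierW p (hEhat b)) (abs_nonneg _)).trans_lt
        (hsmall (inr b)))

lemma edgeBarrier_add_le (hp : 1 ≤ p) (hE : ∀ a, 0 < f (inl a) + δ a)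
    (hEhat : ∀ b, 0 < f (inr b)) (e : E ⊕ Ehat)
    (ht : weight p δ f e * |t e| ≤ 1 / (4 * p)) :
    edgeBarrier p δ e ((f + t) e) ≤ edgeBarrier p δ e (f e) - weight p δ f e * t e
      + 10 * p * (weight p δ f e * t e) ^ 2 := by
  have hpR : (1 : ℝ) ≤ p := by exact_mod_cast hp
  rcases e with a | b
  · have hw : weight p δ f (inl a) = (f (inl a) + δ a)⁻¹ := one_div _
    have hquarter : 1 / (4 * (p : ℝ)) ≤ 1 / 2 := by gcongr; linarith
    rw [hw] at ht ⊢
    have := neg_log_add_le (hE a) (ht.trans hquarter)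
    simp only [edgeBarrier, Sum.elim_inl, Pi.add_apply]
    rw [add_right_comm]
    nlinarith [sq_nonneg ((f (inl a) + δ a)⁻¹ * t (inl a))]
  · exact barrierV_add_le hp (hEhat b) ht

theorem pot_add_le [Fintype E] [Fintype Ehat] (hp : 1 ≤ p) {ℓ : E ⊕ Ehat → ℝ} {m Fstar : ℝ}
    (hm : 0 ≤ m) (hgap : Fstar < ∑ e, ℓ e * f e) (hE : ∀ a, 0 < f (inl a) + δ a)
    (hEhat : ∀ b, 0 < f (inr b)) (hgap' : Fstar < ∑ e, ℓ e * (f + t) e)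
    {r : ℝ} (ht : ∑ e, weight p δ f e * |t e| ≤ r) (hr : r ≤ 1 / (4 * p)) :
    pot p ℓ δ m Fstar (f + t) ≤ pot p ℓ δ m Fstar f + ∑ e, grad p ℓ δ m Fstar f e * t e
      + 10 * p * r ^ 2 := by
  rw [pot_eq_log_add_sum_edgeBarrier, pot_eq_log_add_sum_edgeBarrier]
  set S := ∑ e, ℓ e * f e - Fstar
  have hS : 0 < S := sub_pos.2 hgap
  have hlin : ∑ e, ℓ e * (f + t) e - Fstar = S + ∑ e, ℓ e * t e := by
    simp only [S, Pi.add_apply, mul_add, Finset.sum_add_distrib]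
    ring
  have hgrad : ∑ e, grad p ℓ δ m Fstar f e * t e
      = 10 * m / S * ∑ e, ℓ e * t e - ∑ e, weight p δ f e * t e := by
    simp only [grad, sub_mul, Finset.sum_sub_distrib, Finset.mul_sum, mul_assoc, S]
  have hlog := mul_le_mul_of_nonneg_left
    (log_add_le_log_add_div hS (hlin ▸ sub_pos.2 hgap')) (by positivity : (0 : ℝ) ≤ 10 * m)
  have hedges := Finset.sum_le_sum fun e (_ : e ∈ Finset.univ) =>
    edgeBarrier_add_le hp hE hEhat e ((weight_mul_abs_le_sum hE hEhat e).trans (ht.trans hr))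
  rw [Finset.sum_add_distrib, Finset.sum_sub_distrib, ← Finset.mul_sum] at hedges
  have hnorm : 0 ≤ ∑ e, weight p δ f e * |t e| :=
    Finset.sum_nonneg fun e _ => mul_nonneg (weight_pos hE hEhat e).le (abs_nonneg _)
  have hsq := mul_le_mul_of_nonneg_left
    ((sum_sq_mul_le_sq_sum_mul_abs fun e => (weight_pos hE hEhat e).le).trans
      (pow_le_pow_left₀ hnorm ht 2))
    (by positivity : (0 : ℝ) ≤ 10 * p)
  rw [hlin, hgrad]
  have : 10 * m * (Real.log S + (∑ e, ℓ e * t e) / S)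
      = 10 * m * Real.log S + 10 * m / S * ∑ e, ℓ e * t e := by ring
  linarith

end Potential

theorem potential_decrease_general {E Ehat : Type*} [Fintype E] [Fintype Ehat]
    (p : ℕ) (hp : 2 ≤ p) (ℓ : E ⊕ Ehat → ℝ) (δ : E → ℝ)
    (m Fstar : ℝ) (hm : 1 ≤ m)
    (β : ℝ) (hβ0 : 0 < β) (hβ1 : β < 1)
    (f : E ⊕ Ehat → ℝ)
    (hadm1 : Fstar < ∑ e, ℓ e * f e)
    (hadm2 : ∀ e : E, 0 < f (inl e) + δ e)
    (hadm3 : ∀ e : Ehat, 0 < f (inr e))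
    (gt : E ⊕ Ehat → ℝ)
    (hgt : ∀ e, |gt e - grad p ℓ δ m Fstar f e| ≤ (β / 10) * weight p δ f e)
    (wt : E ⊕ Ehat → ℝ)
    (hwt : ∀ e, (2 : ℝ)⁻¹ * weight p δ f e ≤ wt e ∧ wt e ≤ 2 * weight p δ f e)
    (Δ : E ⊕ Ehat → ℝ)
    (hgood : ∑ e, gt e * Δ e ≤ -β * ∑ e, wt e * |Δ e|)
    (η : ℝ) (hη : 0 < η)
    (hηnorm : η * ∑ e, wt e * |Δ e| = β / (100 * p))
    (hstep : Fstar < ∑ e, ℓ e * (f + η • Δ) e) :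
    (Fstar < ∑ e, ℓ e * (f + η • Δ) e) ∧
    (∀ e : E, 0 < (f + η • Δ) (inl e) + δ e) ∧
    (∀ e : Ehat, 0 < (f + η • Δ) (inr e)) ∧
    pot p ℓ δ m Fstar (f + η • Δ) ≤ pot p ℓ δ m Fstar f - β ^ 2 / (10 ^ 4 * p) := by
  have hp1 : 1 ≤ p := by omega
  have hpR : (1 : ℝ) ≤ p := by exact_mod_cast hp1
  set T := ∑ e, wt e * |Δ e|
  have hwT : ∑ e, weight p δ f e * |Δ e| ≤ 2 * T :=
    sum_mul_abs_le_two_mul_of_half_le fun e => (hwt e).1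
  have hlen : ∑ e, weight p δ f e * |(η • Δ) e| ≤ β / (50 * p) := by
    simp only [Pi.smul_apply, smul_eq_mul, abs_mul, abs_of_pos hη, mul_left_comm _ η,
      ← Finset.mul_sum]
    calc η * ∑ e, weight p δ f e * |Δ e| ≤ η * (2 * T) := mul_le_mul_of_nonneg_left hwT hη.le
      _ = β / (50 * p) := by rw [mul_left_comm, hηnorm]; field_simp; ring
  have hquarter : β / (50 * p) ≤ 1 / (4 * p) := by gcongr; linarith
  obtain ⟨hE, hEhat⟩ := add_pos_of_sum_weight_mul_abs_lt_one hadm2 hadm3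
    (hlen.trans_lt (hquarter.trans_lt (by rw [div_lt_one (by positivity)]; linarith)))
  refine ⟨hstep, hE, hEhat, ?_⟩
  have hdir : ∑ e, grad p ℓ δ m Fstar f e * Δ e ≤ -(4 * β / 5) * T := by
    nlinarith [sum_mul_le_of_abs_sub_le (x := Δ) hgt]
  calc pot p ℓ δ m Fstar (f + η • Δ)
      ≤ pot p ℓ δ m Fstar f + ∑ e, grad p ℓ δ m Fstar f e * (η • Δ) e
        + 10 * p * (β / (50 * p)) ^ 2 :=
      pot_add_le hp1 (by linarith) hadm1 hadm2 hadm3 hstep hlen hquarter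
    _ = pot p ℓ δ m Fstar f + η * ∑ e, grad p ℓ δ m Fstar f e * Δ e
        + 10 * p * (β / (50 * p)) ^ 2 := by
      simp only [Pi.smul_apply, smul_eq_mul, mul_left_comm _ η, ← Finset.mul_sum]
    _ ≤ pot p ℓ δ m Fstar f + η * (-(4 * β / 5) * T) + 10 * p * (β / (50 * p)) ^ 2 := by
      gcongr
    _ = pot p ℓ δ m Fstar f - 40 * (β ^ 2 / (10 ^ 4 * p)) := by
      rw [mul_left_comm, hηnorm]
      field_simp
      ring
    _ ≤ pot p ℓ δ m Fstar f - β ^ 2 / (10 ^ 4 * p) := by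
      linarith [show 0 ≤ β ^ 2 / (10 ^ 4 * p) by positivity]

/-- single-step progress, Lemma `progress`: taking a step `η·Δ` along an
approximately good min-ratio cycle with `η‖W̃Δ‖₁ = β/(100p)` keeps the flow admissible and
decreases the potential by at least `β²/(10⁴·p)`. -/
theorem potential_decrease {E Ehat : Type*} [Fintype E] [Fintype Ehat]
    (p : ℕ) (hp : 2 ≤ p) (ℓ : E ⊕ Ehat → ℝ) (δ : E → ℝ) (hδ : ∀ e, 0 ≤ δ e)
    (m Fstar : ℝ) (hm : 1 ≤ m)
    (β : ℝ) (hβ0 : 0 < β) (hβ1 : β < 1)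
    (f : E ⊕ Ehat → ℝ)
    (hadm1 : Fstar < ∑ e, ℓ e * f e)
    (hadm2 : ∀ e : E, 0 < f (inl e) + δ e)
    (hadm3 : ∀ e : Ehat, 0 < f (inr e))
    (gt : E ⊕ Ehat → ℝ)
    (hgt : ∀ e, |gt e - grad p ℓ δ m Fstar f e| ≤ (β / 10) * weight p δ f e)
    (wt : E ⊕ Ehat → ℝ) (hwt0 : ∀ e, 0 < wt e)
    (hwt : ∀ e, (2 : ℝ)⁻¹ * weight p δ f e ≤ wt e ∧ wt e ≤ 2 * weight p δ f e)
    (Δ : E ⊕ Ehat → ℝ) (hΔ : Δ ≠ 0)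
    (hgood : ∑ e, gt e * Δ e ≤ -β * ∑ e, wt e * |Δ e|)
    (η : ℝ) (hη : 0 < η)
    (hηnorm : η * ∑ e, wt e * |Δ e| = β / (100 * p))
    (hstep : Fstar < ∑ e, ℓ e * (f + η • Δ) e) :
    (Fstar < ∑ e, ℓ e * (f + η • Δ) e) ∧
    (∀ e : E, 0 < (f + η • Δ) (inl e) + δ e) ∧
    (∀ e : Ehat, 0 < (f + η • Δ) (inr e)) ∧
    pot p ℓ δ m Fstar (f + η • Δ) ≤ pot p ℓ δ m Fstar f - β ^ 2 / (10 ^ 4 * p) :=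
  potential_decrease_general p hp ℓ δ m Fstar hm β hβ0 hβ1 f hadm1 hadm2 hadm3 gt hgt wt hwt Δ hgood
    η hη hηnorm hstep
end

section
/- Let p ≥ 2 be an integer, let x > 0, and let δ ∈ ℝ satisfy W_p(x)·|δ| ≤ 1/(100p). Then x + δ > 0 and V_p(x + δ) ≤ V_p(x) − W_p(x)·δ + 2p·W_p(x)²·δ². -/
set_option maxHeartbeats 1600000 in
/-- second-order bound for the barrier: if `W_p(x)·|δ| ≤ 1/(100p)` then
`x + δ > 0` and `V_p(x+δ) ≤ V_p(x) - W_p(x)·δ + 2p·W_p(x)²·δ²`. -/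
theorem barrier_second_order (p : ℕ) (hp : 2 ≤ p) (x : ℝ) (hx : 0 < x)
    (δ : ℝ) (hδ : barrierW p x * |δ| ≤ 1 / (100 * p)) :
    0 < x + δ ∧
      barrierV p (x + δ) ≤ barrierV p x - barrierW p x * δ + 2 * p * (barrierW p x) ^ 2 * δ ^ 2 := by
  have hP : (2:ℝ) ≤ (p:ℝ) := by exact_mod_cast hp
  have hP0 : (0:ℝ) < p := by linarith
  have hp' : (p:ℝ) ≠ 0 := hP0.ne'
  -- formulas for W
  have hWzle : ∀ t : ℝ, t ≤ 1 → barrierW p t = t ^ (-(p:ℤ) - 1) := fun t ht => if_pos ht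
  have hWle : ∀ t : ℝ, 0 < t → t ≤ 1 → barrierW p t = (t ^ (p+1))⁻¹ := by
    intro t ht ht1
    rw [hWzle t ht1, show -(p:ℤ) - 1 = -((p+1 : ℕ) : ℤ) by push_cast; ring, zpow_neg, zpow_natCast]
  have hWge : ∀ t : ℝ, 1 ≤ t → barrierW p t = t⁻¹ := by
    intro t ht
    rcases eq_or_lt_of_le ht with h | h
    · rw [← h]; simp [barrierW]
    · rw [barrierW, if_neg (not_le.mpr h), one_div]
  have hWpos : ∀ t : ℝ, 0 < t → 0 < barrierW p t := by
    intro t ht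
    rcases le_or_gt t 1 with h | h
    · rw [hWle t ht h]; positivity
    · rw [hWge t h.le]; positivity
  have hWx1 : 1/x ≤ barrierW p x := by
    rcases le_or_gt x 1 with h | h
    · rw [hWle x hx h, one_div]
      have h1 : x ^ (p+1) ≤ x := by
        calc x ^ (p+1) ≤ x ^ 1 := pow_le_pow_of_le_one hx.le h (by omega)
        _ = x := pow_one x
      exact inv_anti₀ (pow_pos hx _) h1
    · rw [hWge x h.le, one_div]
  have hδx : |δ| ≤ x / (100*p) := by
    have h3 : |δ| * (1/x) ≤ 1/(100*p) :=
      le_trans (mul_le_mul_of_nonneg_left hWx1 (abs_nonneg δ)) (by rwa [mul_comm] at hδ)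
    have h4 : |δ| = |δ| * (1/x) * x := by field_simp
    rw [h4]
    calc |δ| * (1/x) * x ≤ 1/(100*p) * x := mul_le_mul_of_nonneg_right h3 hx.le
    _ = x / (100*p) := by ring
  have hε : (1:ℝ)/(100*p) ≤ 1/200 := by
    apply one_div_le_one_div_of_le (by norm_num)
    linarith
  have hxd : x / (100*p) ≤ x / 200 := by
    apply div_le_div_of_nonneg_left hx.le (by norm_num)
    linarith
  have hpos : 0 < x + δ := by
    have := neg_abs_le δ
    nlinarith
  obtain ⟨a0, ha0def⟩ : ∃ a0 : ℝ, a0 = x - x/(100*p) := ⟨_, rfl⟩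
  have ha0eq : a0 = x * (1 - 1/(100*p)) := by rw [ha0def]; ring
  have hepos : (0:ℝ) < 1 - 1/(100*p) := by linarith
  have ha0pos : 0 < a0 := by rw [ha0eq]; positivity
  have ha0x : a0 ≤ x := by
    have h0 : 0 ≤ x/(100*p) := by positivity
    linarith [ha0def]
  have ha0δ : a0 ≤ x + δ := by
    have := neg_abs_le δ
    linarith [ha0def]
  obtain ⟨W, hWdef⟩ : ∃ W : ℝ, W = barrierW p x := ⟨_, rfl⟩
  rw [← hWdef] at hδ hWx1
  have hW0 : 0 < W := hWdef ▸ hWpos x hx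
  obtain ⟨M, hMdef⟩ : ∃ M : ℝ, M = 2 * (p:ℝ) * W^2 := ⟨_, rfl⟩
  have hM0 : 0 ≤ M := by rw [hMdef]; positivity
  -- Bernoulli + key numeric inequalities
  have hb1 : (1:ℝ) - ((p:ℝ)+2)*(1/(100*p)) ≤ (1 - 1/(100*p))^(p+2) := by
    have h := one_add_mul_le_pow (show (-2:ℝ) ≤ -(1/(100*p)) by linarith) (p+2)
    calc (1:ℝ) - ((p:ℝ)+2)*(1/(100*p)) = 1 + ((p+2:ℕ):ℝ) * (-(1/(100*p))) := by push_cast; ring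
    _ ≤ (1 + -(1/(100*p)))^(p+2) := h
    _ = (1 - 1/(100*p))^(p+2) := by ring
  have hK : ((p:ℝ)+1) ≤ 2*p*(1 - 1/(100*p))^(p+2) := by
    have h2 : 2*(p:ℝ)*(1 - ((p:ℝ)+2)*(1/(100*p))) = 2*p - ((p:ℝ)+2)/50 := by
      field_simp
      ring
    nlinarith [mul_le_mul_of_nonneg_left hb1 (by linarith : (0:ℝ) ≤ 2*p)]
  have hpe : (p:ℝ)*(1/(100*p)) = 1/100 := by field_simp
  have hK2 : (1:ℝ) ≤ 2*p*(1 - 1/(100*p))^2 := by nlinarith [sq_nonneg (1/(100*(p:ℝ)))]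
  have hBpow : (0:ℝ) < (1 - 1/(100*p))^(p+2) := pow_pos hepos _
  -- Step B: second-derivative bounds
  have hW2 : (x^(p+2))⁻¹ ≤ W^2 := by
    rcases le_or_gt x 1 with h | h
    · rw [hWdef, hWle x hx h, inv_pow, ← pow_mul]
      exact inv_anti₀ (pow_pos hx _) (pow_le_pow_of_le_one hx.le h (by omega))
    · rw [hWdef, hWge x h.le, inv_pow]
      exact inv_anti₀ (pow_pos hx _) (pow_le_pow_right₀ h.le (by omega))
  have hB1 : ∀ t : ℝ, 0 < t → a0 ≤ t → t ≤ 1 → ((p:ℝ)+1) * (t^(p+2))⁻¹ ≤ M := by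
    intro t ht hta ht1
    have hxp : (0:ℝ) < x^(p+2) := pow_pos hx _
    have hap : (0:ℝ) < a0^(p+2) := pow_pos ha0pos _
    have ht2 : a0^(p+2) ≤ t^(p+2) := pow_le_pow_left₀ ha0pos.le hta _
    have e2 : 2*(p:ℝ)*(a0^(p+2)) = 2*p*((1 - 1/(100*p))^(p+2) * x^(p+2)) := by
      rw [ha0eq, mul_pow]; ring
    have h3 := mul_le_mul_of_nonneg_right hK hxp.le
    have key : ((p:ℝ)+1) / (a0^(p+2)) ≤ 2*p / (x^(p+2)) := by
      rw [div_le_div_iff₀ hap hxp]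
      linarith [h3, e2]
    calc ((p:ℝ)+1) * (t^(p+2))⁻¹
        ≤ ((p:ℝ)+1) * (a0^(p+2))⁻¹ :=
          mul_le_mul_of_nonneg_left (inv_anti₀ hap ht2) (by positivity)
    _ ≤ 2*p*(x^(p+2))⁻¹ := by
          have := key
          rw [div_eq_mul_inv, div_eq_mul_inv] at this
          exact this
    _ ≤ 2*p*W^2 := mul_le_mul_of_nonneg_left hW2 (by positivity)
    _ = M := hMdef.symm
  have hB2 : ∀ t : ℝ, 1 ≤ t → a0 ≤ t → (t^2)⁻¹ ≤ M := by
    intro t ht hta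
    rcases le_or_gt x 1 with h | h
    · have hW1 : 1 ≤ W := by
        rw [hWdef, hWle x hx h, one_le_inv₀ (pow_pos hx _)]
        exact pow_le_one₀ hx.le h
      have h1 : (1:ℝ) ≤ t^2 := by
        calc (1:ℝ) = 1*1 := by ring
        _ ≤ t*t := mul_le_mul ht ht zero_le_one (by linarith)
        _ = t^2 := (sq t).symm
      have htinv : (t^2)⁻¹ ≤ 1 := inv_le_one_of_one_le₀ h1
      have hWW : (1:ℝ) ≤ W^2 := by
        calc (1:ℝ) = 1*1 := by ring
        _ ≤ W*W := mul_le_mul hW1 hW1 zero_le_one hW0.le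
        _ = W^2 := (sq W).symm
      have hM1 : (1:ℝ) ≤ M := by
        rw [hMdef]
        calc (1:ℝ) = 1*1 := by ring
        _ ≤ (2*(p:ℝ))*W^2 := mul_le_mul (by linarith) hWW zero_le_one (by linarith)
        _ = 2*(p:ℝ)*W^2 := by ring
      linarith
    · have hWx : W = x⁻¹ := by rw [hWdef, hWge x h.le]
      have hxp : (0:ℝ) < x^2 := pow_pos hx _
      have hap : (0:ℝ) < a0^2 := pow_pos ha0pos _
      have ht2 : a0^2 ≤ t^2 := pow_le_pow_left₀ ha0pos.le hta _
      have e2 : 2*(p:ℝ)*(a0^2) = 2*p*((1 - 1/(100*p))^2 * x^2) := by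
        rw [ha0eq, mul_pow]; ring
      have h3 := mul_le_mul_of_nonneg_right hK2 hxp.le
      have key : (1:ℝ) / (a0^2) ≤ 2*p / (x^2) := by
        rw [div_le_div_iff₀ hap hxp]
        linarith [h3, e2]
      have hM' : M = 2*p*(x^2)⁻¹ := by rw [hMdef, hWx, inv_pow]
      rw [hM']
      calc (t^2)⁻¹ ≤ (a0^2)⁻¹ := inv_anti₀ hap ht2
      _ ≤ 2*p*(x^2)⁻¹ := by
          have := key
          rw [div_eq_mul_inv, div_eq_mul_inv, one_mul] at this
          exact this
  -- Step C: Lipschitz estimate for W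
  have hC1 : ∀ s u : ℝ, 0 < s → a0 ≤ s → s ≤ u → u ≤ 1 →
      |barrierW p u - barrierW p s| ≤ M * (u - s) := by
    intro s u hs0 hsa hsu hu1
    have hd : ∀ t ∈ Set.Icc s u,
        HasDerivWithinAt (fun y : ℝ => y ^ (-(p:ℤ) - 1))
          ((((-(p:ℤ) - 1):ℤ):ℝ) * t ^ ((-(p:ℤ) - 1) - 1)) (Set.Icc s u) t := by
      intro t ht
      exact (hasDerivAt_zpow _ _ (Or.inl (ne_of_gt (lt_of_lt_of_le hs0 ht.1)))).hasDerivWithinAt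
    have hbound : ∀ t ∈ Set.Icc s u,
        ‖(((-(p:ℤ) - 1):ℤ):ℝ) * t ^ ((-(p:ℤ) - 1) - 1)‖ ≤ M := by
      intro t ht
      have ht0 : 0 < t := lt_of_lt_of_le hs0 ht.1
      have hz : t ^ ((-(p:ℤ) - 1) - 1) = (t^(p+2))⁻¹ := by
        rw [show (-(p:ℤ) - 1) - 1 = -((p+2 : ℕ) : ℤ) by push_cast; ring, zpow_neg, zpow_natCast]
      rw [hz, Real.norm_eq_abs, abs_mul, abs_of_pos (inv_pos.mpr (pow_pos ht0 _)),
        show |(((-(p:ℤ) - 1):ℤ):ℝ)| = (p:ℝ) + 1 by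
          rw [abs_of_nonpos (by push_cast; linarith)]; push_cast; ring]
      exact hB1 t ht0 (le_trans hsa ht.1) (le_trans ht.2 hu1)
    have := Convex.norm_image_sub_le_of_norm_hasDerivWithin_le hd hbound (convex_Icc s u)
      ⟨le_refl s, hsu⟩ ⟨hsu, le_refl u⟩
    rw [Real.norm_eq_abs, Real.norm_eq_abs, abs_of_nonneg (by linarith : (0:ℝ) ≤ u - s)] at this
    rwa [hWzle u hu1, hWzle s (le_trans hsu hu1)]
  have hC2 : ∀ s u : ℝ, a0 ≤ s → 1 ≤ s → s ≤ u →
      |barrierW p u - barrierW p s| ≤ M * (u - s) := by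
    intro s u hsa hs1 hsu
    have hs0 : (0:ℝ) < s := by linarith
    have hd : ∀ t ∈ Set.Icc s u,
        HasDerivWithinAt (fun y : ℝ => y ^ (-1:ℤ))
          ((((-1:ℤ)):ℝ) * t ^ ((-1:ℤ) - 1)) (Set.Icc s u) t := by
      intro t ht
      exact (hasDerivAt_zpow _ _ (Or.inl (ne_of_gt (lt_of_lt_of_le hs0 ht.1)))).hasDerivWithinAt
    have hbound : ∀ t ∈ Set.Icc s u, ‖(((-1:ℤ)):ℝ) * t ^ ((-1:ℤ) - 1)‖ ≤ M := by
      intro t ht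
      have ht0 : 0 < t := lt_of_lt_of_le hs0 ht.1
      have hz : t ^ ((-1:ℤ) - 1) = (t^2)⁻¹ := by
        rw [show (-1:ℤ) - 1 = -((2 : ℕ) : ℤ) by norm_num, zpow_neg, zpow_natCast]
      rw [hz, Real.norm_eq_abs, abs_mul, abs_of_pos (inv_pos.mpr (pow_pos ht0 _))]
      rw [show |((-1:ℤ):ℝ)| = 1 by norm_num, one_mul]
      exact hB2 t (le_trans hs1 ht.1) (le_trans hsa ht.1)
    have := Convex.norm_image_sub_le_of_norm_hasDerivWithin_le hd hbound (convex_Icc s u)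
      ⟨le_refl s, hsu⟩ ⟨hsu, le_refl u⟩
    rw [Real.norm_eq_abs, Real.norm_eq_abs, abs_of_nonneg (by linarith : (0:ℝ) ≤ u - s)] at this
    rw [hWge u (le_trans hs1 hsu), hWge s hs1]
    simpa [zpow_neg_one] using this
  have hC : ∀ s u : ℝ, 0 < s → a0 ≤ s → s ≤ u →
      |barrierW p u - barrierW p s| ≤ M * (u - s) := by
    intro s u hs0 hsa hsu
    rcases le_or_gt u 1 with h | h
    · exact hC1 s u hs0 hsa hsu h
    rcases le_or_gt 1 s with h' | h'
    · exact hC2 s u hsa h' hsu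
    calc |barrierW p u - barrierW p s|
        ≤ |barrierW p u - barrierW p 1| + |barrierW p 1 - barrierW p s| := abs_sub_le _ _ _
    _ ≤ M * (u - 1) + M * (1 - s) :=
        add_le_add (hC2 1 u (by linarith) (le_refl 1) h.le) (hC1 s 1 hs0 hsa h'.le (le_refl 1))
    _ = M * (u - s) := by ring
  have hCx : ∀ t : ℝ, 0 < t → a0 ≤ t → |barrierW p t - W| ≤ M * |t - x| := by
    intro t ht hta
    rcases le_total t x with h | h
    · rw [abs_sub_comm, abs_of_nonpos (by linarith : t - x ≤ 0), hWdef]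
      calc |barrierW p x - barrierW p t| ≤ M * (x - t) := hC t x ht hta h
      _ = M * -(t - x) := by ring
    · rw [abs_of_nonneg (by linarith : 0 ≤ t - x), hWdef]
      exact hC x t hx ha0x h
  -- formulas for V
  have hVle : ∀ t : ℝ, t ≤ 1 → barrierV p t = t ^ (-(p:ℤ)) / p := fun t ht => if_pos ht
  have hVge : ∀ t : ℝ, 1 ≤ t → barrierV p t = 1/(p:ℝ) - Real.log t := by
    intro t ht
    rcases eq_or_lt_of_le ht with h | h
    · rw [← h]; simp [barrierV]
    · rw [barrierV, if_neg (not_le.mpr h)]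
  obtain ⟨F, hFdef⟩ : ∃ F : ℝ → ℝ, F = fun t => barrierV p t + W * t := ⟨_, rfl⟩
  obtain ⟨C0, hC0def⟩ : ∃ C0 : ℝ, C0 = M * |δ| := ⟨_, rfl⟩
  -- Step D: MVT for F on the two pieces
  have hD1 : ∀ s u : ℝ, 0 < s → a0 ≤ s → x - |δ| ≤ s → s ≤ u → u ≤ 1 → u ≤ x + |δ| →
      |F u - F s| ≤ C0 * (u - s) := by
    intro s u hs0 hsa hsx hsu hu1 hux
    have hd : ∀ t ∈ Set.Icc s u, HasDerivWithinAt F (W - barrierW p t) (Set.Icc s u) t := by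
      intro t ht
      have ht0 : 0 < t := lt_of_lt_of_le hs0 ht.1
      have ht1 : t ≤ 1 := le_trans ht.2 hu1
      have h1 : HasDerivAt (fun y : ℝ => y ^ (-(p:ℤ)) / (p:ℝ) + W * y)
          ((((-(p:ℤ)):ℤ):ℝ) * t ^ (-(p:ℤ) - 1) / p + W * 1) t :=
        ((hasDerivAt_zpow _ _ (Or.inl ht0.ne')).div_const _).add
          ((hasDerivAt_id t).const_mul W)
      have heq : (((-(p:ℤ)):ℤ):ℝ) * t ^ (-(p:ℤ) - 1) / p + W * 1 = W - barrierW p t := by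
        rw [hWzle t ht1]
        have hz : (((-(p:ℤ)):ℤ):ℝ) * t ^ (-(p:ℤ) - 1) / p = -(t ^ (-(p:ℤ) - 1)) := by
          push_cast
          field_simp
        rw [hz]
        ring
      rw [heq] at h1
      apply h1.hasDerivWithinAt.congr
      · intro y hy
        simp only [hFdef]
        rw [hVle y (le_trans hy.2 hu1)]
      · simp only [hFdef]
        rw [hVle t ht1]
    have hbound : ∀ t ∈ Set.Icc s u, ‖W - barrierW p t‖ ≤ C0 := by
      intro t ht
      have ht0 : 0 < t := lt_of_lt_of_le hs0 ht.1
      have htx : |t - x| ≤ |δ| := by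
        rw [abs_le]
        constructor
        · linarith [ht.1]
        · linarith [ht.2]
      rw [Real.norm_eq_abs, abs_sub_comm, hC0def]
      calc |barrierW p t - W| ≤ M * |t - x| := hCx t ht0 (le_trans hsa ht.1)
      _ ≤ M * |δ| := mul_le_mul_of_nonneg_left htx hM0
    have := Convex.norm_image_sub_le_of_norm_hasDerivWithin_le hd hbound (convex_Icc s u)
      ⟨le_refl s, hsu⟩ ⟨hsu, le_refl u⟩
    rwa [Real.norm_eq_abs, Real.norm_eq_abs, abs_of_nonneg (by linarith : (0:ℝ) ≤ u - s)] at this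
  have hD2 : ∀ s u : ℝ, a0 ≤ s → 1 ≤ s → x - |δ| ≤ s → s ≤ u → u ≤ x + |δ| →
      |F u - F s| ≤ C0 * (u - s) := by
    intro s u hsa hs1 hsx hsu hux
    have hs0 : (0:ℝ) < s := by linarith
    have hd : ∀ t ∈ Set.Icc s u, HasDerivWithinAt F (W - barrierW p t) (Set.Icc s u) t := by
      intro t ht
      have ht0 : 0 < t := lt_of_lt_of_le hs0 ht.1
      have ht1 : 1 ≤ t := le_trans hs1 ht.1
      have h1 : HasDerivAt (fun y : ℝ => 1/(p:ℝ) - Real.log y + W * y)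
          (0 - t⁻¹ + W * 1) t :=
        ((hasDerivAt_const t (1/(p:ℝ))).sub (Real.hasDerivAt_log ht0.ne')).add
          ((hasDerivAt_id t).const_mul W)
      have heq : 0 - t⁻¹ + W * 1 = W - barrierW p t := by
        rw [hWge t ht1]; ring
      rw [heq] at h1
      apply h1.hasDerivWithinAt.congr
      · intro y hy
        simp only [hFdef]
        rw [hVge y (le_trans hs1 hy.1)]
      · simp only [hFdef]
        rw [hVge t ht1]
    have hbound : ∀ t ∈ Set.Icc s u, ‖W - barrierW p t‖ ≤ C0 := by
      intro t ht
      have ht0 : 0 < t := lt_of_lt_of_le hs0 ht.1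
      have htx : |t - x| ≤ |δ| := by
        rw [abs_le]
        constructor
        · linarith [ht.1]
        · linarith [ht.2]
      rw [Real.norm_eq_abs, abs_sub_comm, hC0def]
      calc |barrierW p t - W| ≤ M * |t - x| := hCx t ht0 (le_trans hsa ht.1)
      _ ≤ M * |δ| := mul_le_mul_of_nonneg_left htx hM0
    have := Convex.norm_image_sub_le_of_norm_hasDerivWithin_le hd hbound (convex_Icc s u)
      ⟨le_refl s, hsu⟩ ⟨hsu, le_refl u⟩
    rwa [Real.norm_eq_abs, Real.norm_eq_abs, abs_of_nonneg (by linarith : (0:ℝ) ≤ u - s)] at this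
  -- assemble
  refine ⟨hpos, ?_⟩
  obtain ⟨a, hadef⟩ : ∃ a : ℝ, a = min x (x+δ) := ⟨_, rfl⟩
  obtain ⟨b, hbdef⟩ : ∃ b : ℝ, b = max x (x+δ) := ⟨_, rfl⟩
  have ha0a : a0 ≤ a := by rw [hadef]; exact le_min ha0x ha0δ
  have hapos : 0 < a := lt_of_lt_of_le ha0pos ha0a
  have hax : x - |δ| ≤ a := by
    rw [hadef]
    apply le_min (by linarith [abs_nonneg δ])
    linarith [neg_abs_le δ]
  have hbx : b ≤ x + |δ| := by
    rw [hbdef]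
    apply max_le (by linarith [abs_nonneg δ])
    linarith [le_abs_self δ]
  have hab : a ≤ b := by rw [hadef, hbdef]; exact min_le_max
  have hba : b - a = |δ| := by
    rcases le_total 0 δ with h | h
    · rw [hadef, hbdef, min_eq_left (by linarith), max_eq_right (by linarith), abs_of_nonneg h]
      ring
    · rw [hadef, hbdef, min_eq_right (by linarith), max_eq_left (by linarith), abs_of_nonpos h]
      ring
  have hFab : |F (x+δ) - F x| = |F b - F a| := by
    rcases le_total 0 δ with h | h
    · rw [hadef, hbdef, min_eq_left (by linarith), max_eq_right (by linarith)]
    · rw [hadef, hbdef, min_eq_right (by linarith), max_eq_left (by linarith), abs_sub_comm]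
  have key : |F b - F a| ≤ C0 * (b - a) := by
    rcases le_or_gt b 1 with h | h
    · exact hD1 a b hapos ha0a hax hab h hbx
    rcases le_or_gt 1 a with h' | h'
    · exact hD2 a b ha0a h' hax hab hbx
    calc |F b - F a| ≤ |F b - F 1| + |F 1 - F a| := abs_sub_le _ _ _
    _ ≤ C0 * (b - 1) + C0 * (1 - a) :=
        add_le_add (hD2 1 b (by linarith) (le_refl 1) (by linarith) h.le hbx)
          (hD1 a 1 hapos ha0a hax h'.le (le_refl 1) (by linarith))
    _ = C0 * (b - a) := by ring
  have final : |F (x+δ) - F x| ≤ M * δ^2 := by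
    rw [hFab]
    calc |F b - F a| ≤ C0 * (b - a) := key
    _ = M * (|δ| * |δ|) := by rw [hba, hC0def]; ring
    _ = M * δ^2 := by rw [← abs_mul, ← sq, abs_of_nonneg (sq_nonneg δ)]
  have hexp : F (x+δ) - F x = barrierV p (x+δ) - barrierV p x + W * δ := by
    simp only [hFdef]; ring
  rw [hexp] at final
  have hfin2 := (abs_le.mp final).2
  rw [hMdef, hWdef] at hfin2
  linarith
end

section
/- Let V be a finite vertex set with |V| = n ≥ 2 and a distinguished source s ∈ V. Let the edge set be E ∪ Ê, where E is a finite set of directed edges with nonnegative lengths ℓ_e ≥ 0, and Ê = {e_v : v ∈ V∖{s}} consists of one edge e_v from s to v of length ℓ_{e_v} = d_v > 0 for each v ≠ s. Let B be the incidence matrix, let F = ∑_{v≠s} d_v, let α > 0, F* = (1−α)F, let m > 0 satisfy |E| + |Ê| ≤ 2m, let p ≥ 2 be an integer, and let δ_e ≥ 0 for e ∈ E. Suppose: (i) f ∈ ℝ^{E∪Ê} is entrywise nonnegative, routes the demand d given by d_s = n−1 and d_v = −1 for v ≠ s, and satisfies f_e + δ_e > 0 for e ∈ E and f_e > 0 for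 e ∈ Ê; (ii) ℓ^⊤f > (1+5α)F; (iii) for every v ≠ s there exists an entrywise nonnegative h_v ∈ ℝ^{E∪Ê} routing the demand χ_s − χ_v (one unit from s to v) with ℓ^⊤h_v ≤ d_v. Define w ∈ ℝ^{E∪Ê} by w_e = 1/(f_e+δ_e) for e ∈ E and w_e = W_p(f_e) for e ∈ Ê, and g = (10m/(ℓ^⊤f − F*))·ℓ − w. Then there exists a nonzero circulation Δ ∈ ℝ^{E∪Ê} (B^⊤Δ = 0) with g^⊤Δ ≤ −‖WΔ‖₁, i.e. g^⊤Δ/‖WΔ‖₁ ≤ −1. -/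
open Sum

/-- `f` routes the demand `d` in the directed graph given by `tail`, `head`:
for every vertex `u`, the net outflow of `f` at `u` equals `d u`. -/
def Routes {Edge V : Type*} [Fintype Edge] [DecidableEq V]
    (tail head : Edge → V) (f : Edge → ℝ) (d : V → ℝ) : Prop :=
  ∀ u : V, ((∑ e, if tail e = u then f e else 0) - ∑ e, if head e = u then f e else 0) = d u

/-!
The circulation is `Δ = 1_Ê - f`: both `f` and the indicator `1_Ê` of the shortcut edges route
the single-source demand, so `Δ` is a circulation, and `ℓᵀΔ = F - ℓᵀf < -5αF`. Since
`ℓᵀf > (1+5α)F`, the gradient term `10m/(ℓᵀf - (1-α)F) · ℓᵀΔ` is at most `-4m`. On every edge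
`w_e(|Δ_e| - Δ_e) ≤ 2`: on `E` because `f_e ≤ f_e + δ_e`, on `e_v` because `Δ = 1 - f` is
negative only when `f > 1`, where `W_p(f) = 1/f`. Summing over the at most `2m` edges,
`‖WΔ‖₁ - wᵀΔ ≤ 4m`, which absorbs the remaining term `-wᵀΔ`.
-/

section Routing

variable {Edge V : Type*} [Fintype Edge] [DecidableEq V] {tail head : Edge → V}

lemma Routes.sub {f g : Edge → ℝ} {d d' : V → ℝ} (hf : Routes tail head f d)
    (hg : Routes tail head g d') : Routes tail head (f - g) (d - d') := by
  intro u
  have split (k : Edge → V) : (∑ e, if k e = u then (f - g) e else 0) =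
      (∑ e, if k e = u then f e else 0) - ∑ e, if k e = u then g e else 0 := by
    rw [← Finset.sum_sub_distrib]
    exact Finset.sum_congr rfl fun e _ => by split_ifs <;> simp
  rw [split, split, Pi.sub_apply, ← hf u, ← hg u]
  ring

lemma Routes.sub_of_same_demand {f g : Edge → ℝ} {d : V → ℝ} (hf : Routes tail head f d)
    (hg : Routes tail head g d) : Routes tail head (f - g) fun _ => 0 := by
  have h := hf.sub hg
  rwa [sub_self] at h

end Routing

section Shortcuts

variable {V E : Type*} [Fintype V] [DecidableEq V] [Fintype E]

def shortcutIndicator (s : V) : E ⊕ {v : V // v ≠ s} → ℝ :=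
  Sum.elim (fun _ => 0) fun _ => 1

lemma routes_shortcutIndicator (s : V) (tailE headE : E → V) :
    Routes (Sum.elim tailE fun _ => s) (Sum.elim headE Subtype.val) (shortcutIndicator s)
      (fun u => if u = s then (Fintype.card V : ℝ) - 1 else -1) := by
  intro u
  rw [Fintype.sum_sum_type, Fintype.sum_sum_type]
  -- `simp` cannot reduce `Sum.elim _ _ (inl a)` inside the `Decidable` instance of an `if`
  change ((∑ a : E, if tailE a = u then (0 : ℝ) else 0) +
      ∑ _v : {v : V // v ≠ s}, if s = u then (1 : ℝ) else 0) -
    ((∑ a : E, if headE a = u then (0 : ℝ) else 0) +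
      ∑ v : {v : V // v ≠ s}, if (v : V) = u then (1 : ℝ) else 0) = _
  by_cases hu : u = s
  · subst hu
    have hhead : (∑ v : {v : V // v ≠ u}, if (v : V) = u then (1 : ℝ) else 0) = 0 :=
      Finset.sum_eq_zero fun v _ => if_neg v.2
    simp [hhead, Nat.cast_sub (Fintype.card_pos_iff.2 ⟨u⟩)]
  · have hhead : (∑ v : {v : V // v ≠ s}, if (v : V) = u then (1 : ℝ) else 0) = 1 := by
      rw [Fintype.sum_eq_single ⟨u, hu⟩ fun v hv => if_neg fun h => hv (Subtype.ext h)]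
      simp
    simp [hu, Ne.symm hu, hhead]

lemma sum_mul_shortcutIndicator (s : V) (ℓE : E → ℝ) (dv : {v : V // v ≠ s} → ℝ) :
    ∑ e, Sum.elim ℓE dv e * shortcutIndicator s e = ∑ v, dv v := by
  simp [shortcutIndicator, Fintype.sum_sum_type]

end Shortcuts

lemma mul_abs_sub_mul_le_two {w x : ℝ} (h : w * -x ≤ 1) : w * |x| - w * x ≤ 2 := by
  rcases le_or_gt 0 x with hx | hx
  · rw [abs_of_nonneg hx, sub_self]
    norm_num
  · rw [abs_of_neg hx]
    linarith

lemma sum_mul_abs_sub_mul_le_two_mul_card {ι : Type*} [Fintype ι] {w x : ι → ℝ}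
    (h : ∀ i, w i * -x i ≤ 1) : ∑ i, (w i * |x i| - w i * x i) ≤ 2 * Fintype.card ι := by
  calc ∑ i, (w i * |x i| - w i * x i) ≤ ∑ _i : ι, (2 : ℝ) :=
        Finset.sum_le_sum fun i _ => mul_abs_sub_mul_le_two (h i)
    _ = 2 * Fintype.card ι := by simp [mul_comm]

lemma one_div_add_mul_le_one {x δ : ℝ} (hδ : 0 ≤ δ) (hxδ : 0 < x + δ) :
    1 / (x + δ) * x ≤ 1 := by
  rw [one_div_mul_eq_div, div_le_one hxδ]
  linarith

lemma barrierW_mul_sub_one_le_one (p : ℕ) {x : ℝ} (hx : 0 < x) : barrierW p x * (x - 1) ≤ 1 := by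
  unfold barrierW
  split_ifs with h
  · have : 0 < x ^ (-(p : ℤ) - 1) := zpow_pos hx _
    nlinarith
  · rw [one_div_mul_eq_div, div_le_one hx]
    linarith

lemma ten_mul_div_mul_sub_le {m α F L : ℝ} (hm : 0 ≤ m) (hα : 0 < α) (hF : 0 ≤ F)
    (hL : (1 + 5 * α) * F < L) : 10 * m / (L - (1 - α) * F) * (F - L) ≤ -(4 * m) := by
  have hden : 0 < L - (1 - α) * F := by nlinarith
  rw [div_mul_eq_mul_div, div_le_iff₀ hden]
  nlinarith [mul_nonneg hm (mul_nonneg hα.le hF), mul_nonneg hm (sub_pos.2 hL).le]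

lemma sum_sub_mul_le_neg_sum_mul_abs {ι : Type*} [Fintype ι] {c K : ℝ} {ℓ w Δ : ι → ℝ}
    (hℓ : c * ∑ e, ℓ e * Δ e ≤ -K) (hw : ∑ e, (w e * |Δ e| - w e * Δ e) ≤ K) :
    ∑ e, (c * ℓ e - w e) * Δ e ≤ -∑ e, w e * |Δ e| := by
  have expand : ∑ e, (c * ℓ e - w e) * Δ e = c * ∑ e, ℓ e * Δ e - ∑ e, w e * Δ e := by
    rw [Finset.mul_sum, ← Finset.sum_sub_distrib]
    exact Finset.sum_congr rfl fun e _ => by ring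
  rw [Finset.sum_sub_distrib] at hw
  linarith

theorem exists_good_cycle_when_cost_large_general {V E : Type*} [Fintype V] [DecidableEq V] [Fintype E]
    (s : V)
    (tailE headE : E → V) (ℓE : E → ℝ)
    (dv : {v : V // v ≠ s} → ℝ) (hdv : ∀ v, 0 < dv v)
    (p : ℕ)
    (δ : E → ℝ) (hδ : ∀ e, 0 ≤ δ e)
    (α : ℝ) (hα : 0 < α)
    (m : ℝ)
    (hcard : (Fintype.card E : ℝ) + (Fintype.card {v : V // v ≠ s} : ℝ) ≤ 2 * m)
    -- the augmented graph: tail, head and lengths on `E ⊕ Ê`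
    (tail head : E ⊕ {v : V // v ≠ s} → V) (ℓ : E ⊕ {v : V // v ≠ s} → ℝ)
    (htail : tail = Sum.elim tailE fun _ => s)
    (hhead : head = Sum.elim headE Subtype.val)
    (hℓ : ℓ = Sum.elim ℓE dv)
    -- (i) the flow f
    (f : E ⊕ {v : V // v ≠ s} → ℝ)
    (hroutes : Routes tail head f
      (fun u => if u = s then (Fintype.card V : ℝ) - 1 else -1))
    (hf2 : ∀ e : E, 0 < f (inl e) + δ e)
    (hf3 : ∀ e : {v : V // v ≠ s}, 0 < f (inr e))
    -- (ii) large cost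
    (hcost : (1 + 5 * α) * (∑ v, dv v) < ∑ e, ℓ e * f e) :
    -- conclusion: a nonzero circulation of quality at most -1 w.r.t. the weights w and gradient g
    ∃ Δ : E ⊕ {v : V // v ≠ s} → ℝ, Δ ≠ 0 ∧
      Routes tail head Δ (fun _ => 0) ∧
      (∑ e, (10 * m / (∑ e', ℓ e' * f e' - (1 - α) * ∑ v, dv v) * ℓ e -
          Sum.elim (fun e' => 1 / (f (inl e') + δ e'))
            (fun e' => barrierW p (f (inr e'))) e) * Δ e)
        ≤ -(∑ e, Sum.elim (fun e' => 1 / (f (inl e') + δ e'))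
            (fun e' => barrierW p (f (inr e'))) e * |Δ e|) := by
  subst htail hhead hℓ
  have hF : 0 ≤ ∑ v, dv v := Finset.sum_nonneg fun v _ => (hdv v).le
  have hm : 0 ≤ m := by
    have := (Fintype.card E).cast_nonneg (α := ℝ)
    have := (Fintype.card {v : V // v ≠ s}).cast_nonneg (α := ℝ)
    linarith
  set Δ : E ⊕ {v : V // v ≠ s} → ℝ := shortcutIndicator s - f with hΔ
  have hlength : ∑ e, Sum.elim ℓE dv e * Δ e =
      ∑ v, dv v - ∑ e, Sum.elim ℓE dv e * f e := by
    simp only [hΔ, Pi.sub_apply, mul_sub, Finset.sum_sub_distrib, sum_mul_shortcutIndicator]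
  set w : E ⊕ {v : V // v ≠ s} → ℝ :=
    Sum.elim (fun e' => 1 / (f (inl e') + δ e')) fun e' => barrierW p (f (inr e')) with hw
  have hweight : ∀ e, w e * -Δ e ≤ 1 := by
    rintro (a | v)
    · simpa [hw, hΔ, shortcutIndicator] using one_div_add_mul_le_one (hδ a) (hf2 a)
    · simpa [hw, hΔ, shortcutIndicator] using barrierW_mul_sub_one_le_one p (hf3 v)
  refine ⟨Δ, fun h0 => ?_,
    (routes_shortcutIndicator s tailE headE).sub_of_same_demand hroutes, ?_⟩
  · simp only [h0, Pi.zero_apply, mul_zero, Finset.sum_const_zero] at hlength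
    linarith [mul_nonneg hα.le hF]
  refine sum_sub_mul_le_neg_sum_mul_abs (K := 4 * m) ?_
    ((sum_mul_abs_sub_mul_le_two_mul_card hweight).trans ?_)
  · rw [hlength]
    exact ten_mul_div_mul_sub_le hm hα hF hcost
  · rw [Fintype.card_sum]
    push_cast
    linarith

/-- Lemma `value`: in the augmented graph (original edges `E` plus one edge
`e_v = (s, v)` of length `d_v` for each `v ≠ s`), if `f` routes the SSSP demand and has cost
`ℓᵀf > (1+5α)F`, and each vertex `v ≠ s` can be reached from `s` by a nonnegative unit flow of
cost at most `d_v`, then there is a nonzero circulation `Δ` with `gᵀΔ ≤ -‖WΔ‖₁`. -/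
theorem exists_good_cycle_when_cost_large {V E : Type*} [Fintype V] [DecidableEq V] [Fintype E]
    (s : V) (hn : 2 ≤ Fintype.card V)
    (tailE headE : E → V) (ℓE : E → ℝ) (hℓE : ∀ e, 0 ≤ ℓE e)
    (dv : {v : V // v ≠ s} → ℝ) (hdv : ∀ v, 0 < dv v)
    (p : ℕ) (hp : 2 ≤ p)
    (δ : E → ℝ) (hδ : ∀ e, 0 ≤ δ e)
    (α : ℝ) (hα : 0 < α)
    (m : ℝ) (hm : 0 < m)
    (hcard : (Fintype.card E : ℝ) + (Fintype.card {v : V // v ≠ s} : ℝ) ≤ 2 * m)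
    -- the augmented graph: tail, head and lengths on `E ⊕ Ê`
    (tail head : E ⊕ {v : V // v ≠ s} → V) (ℓ : E ⊕ {v : V // v ≠ s} → ℝ)
    (htail : tail = Sum.elim tailE fun _ => s)
    (hhead : head = Sum.elim headE Subtype.val)
    (hℓ : ℓ = Sum.elim ℓE dv)
    -- (i) the flow f
    (f : E ⊕ {v : V // v ≠ s} → ℝ) (hfnn : ∀ e, 0 ≤ f e)
    (hroutes : Routes tail head f
      (fun u => if u = s then (Fintype.card V : ℝ) - 1 else -1))
    (hf2 : ∀ e : E, 0 < f (inl e) + δ e)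
    (hf3 : ∀ e : {v : V // v ≠ s}, 0 < f (inr e))
    -- (ii) large cost
    (hcost : (1 + 5 * α) * (∑ v, dv v) < ∑ e, ℓ e * f e)
    -- (iii) cheap unit flows from s to each v
    (hpath : ∀ v : {v : V // v ≠ s}, ∃ h : E ⊕ {v : V // v ≠ s} → ℝ,
      (∀ e, 0 ≤ h e) ∧
      Routes tail head h
        (fun u => (if u = s then (1 : ℝ) else 0) - if u = (v : V) then 1 else 0) ∧
      ∑ e, ℓ e * h e ≤ dv v) :
    -- conclusion: a nonzero circulation of quality at most -1 w.r.t. the weights w and gradient g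
    ∃ Δ : E ⊕ {v : V // v ≠ s} → ℝ, Δ ≠ 0 ∧
      Routes tail head Δ (fun _ => 0) ∧
      (∑ e, (10 * m / (∑ e', ℓ e' * f e' - (1 - α) * ∑ v, dv v) * ℓ e -
          Sum.elim (fun e' => 1 / (f (inl e') + δ e'))
            (fun e' => barrierW p (f (inr e'))) e) * Δ e)
        ≤ -(∑ e, Sum.elim (fun e' => 1 / (f (inl e') + δ e'))
            (fun e' => barrierW p (f (inr e'))) e * |Δ e|) :=
  exists_good_cycle_when_cost_large_general s tailE headE ℓE dv hdv p δ hδ α hα m hcard tail head ℓ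
    htail hhead hℓ f hroutes hf2 hf3 hcost
end
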